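/- arXiv:2103.05452 — 3 statements merged into one kernel-verified Lean document; each statement's English description precedes it below -/
import Mathlib

section
/- Let G ≤ Aut(T) be self-similar. Then for every integer s ≥ 1 the s-th Basilica group Bas_s(G) is self-similar. -/
/-!
Groups of automorphisms of the `m`-regular rooted tree, encoded via portraits:
an automorphism is determined by the family of its labels (local actions)
`label : List (Fin m) → Equiv.Perm (Fin m)`.
-/

namespace Basilica

/-- An automorphism of the `m`-regular rooted tree, given by its portrait. -/
structure TreeAut (m : ℕ) where
  label : List (Fin m) → Equiv.Perm (Fin m)

namespace TreeAut

variable {m : ℕ}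

lemma ext_label {a b : TreeAut m} (h : ∀ u, a.label u = b.label u) : a = b := by
  cases a
  cases b
  simp only [mk.injEq]
  exact funext h

/-- The section of an automorphism at a vertex. -/
def sec (a : TreeAut m) (v : List (Fin m)) : TreeAut m := ⟨fun u => a.label (v ++ u)⟩

@[simp] lemma sec_label (a : TreeAut m) (v u : List (Fin m)) :
    (a.sec v).label u = a.label (v ++ u) := rfl

@[simp] lemma sec_nil (a : TreeAut m) : a.sec [] = a := rfl

lemma sec_sec (a : TreeAut m) (v w : List (Fin m)) : (a.sec v).sec w = a.sec (v ++ w) :=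
  ext_label fun u => by simp [List.append_assoc]

/-- The action of a tree automorphism on the vertices (finite words). -/
def apply : TreeAut m → List (Fin m) → List (Fin m)
  | _, [] => []
  | a, x :: u => a.label [] x :: (a.sec [x]).apply u

/-- The inverse action of a tree automorphism on the vertices. -/
def invApply : TreeAut m → List (Fin m) → List (Fin m)
  | _, [] => []
  | a, x :: u => (a.label [])⁻¹ x :: (a.sec [(a.label [])⁻¹ x]).invApply u

instance : One (TreeAut m) := ⟨⟨fun _ => 1⟩⟩
instance : Mul (TreeAut m) := ⟨fun a b => ⟨fun u => a.label (b.apply u) * b.label u⟩⟩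
instance : Inv (TreeAut m) := ⟨fun a => ⟨fun u => (a.label (a.invApply u))⁻¹⟩⟩

@[simp] lemma one_label (u : List (Fin m)) : (1 : TreeAut m).label u = 1 := rfl

@[simp] lemma mul_label (a b : TreeAut m) (u : List (Fin m)) :
    (a * b).label u = a.label (b.apply u) * b.label u := rfl

@[simp] lemma inv_label (a : TreeAut m) (u : List (Fin m)) :
    a⁻¹.label u = (a.label (a.invApply u))⁻¹ := rfl

@[simp] lemma one_sec (v : List (Fin m)) : (1 : TreeAut m).sec v = 1 := rfl

@[simp] lemma apply_nil (a : TreeAut m) : a.apply [] = [] := rfl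

lemma apply_cons (a : TreeAut m) (x : Fin m) (u : List (Fin m)) :
    a.apply (x :: u) = a.label [] x :: (a.sec [x]).apply u := rfl

@[simp] lemma one_apply (u : List (Fin m)) : (1 : TreeAut m).apply u = u := by
  induction u with
  | nil => rfl
  | cons x u ih => simp [apply_cons, ih]

lemma apply_append (a : TreeAut m) (v u : List (Fin m)) :
    a.apply (v ++ u) = a.apply v ++ (a.sec v).apply u := by
  induction v generalizing a with
  | nil => simp
  | cons x v ih =>
      simp only [List.cons_append, apply_cons, ih, sec_sec, List.singleton_append,
        List.nil_append]

lemma mul_sec (a b : TreeAut m) (v : List (Fin m)) :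
    (a * b).sec v = a.sec (b.apply v) * b.sec v :=
  ext_label fun u => by simp [apply_append]

lemma mul_apply (a b : TreeAut m) (u : List (Fin m)) :
    (a * b).apply u = a.apply (b.apply u) := by
  induction u generalizing a b with
  | nil => rfl
  | cons x u ih =>
      rw [apply_cons, mul_sec, ih]
      simp [apply_cons, Equiv.Perm.mul_apply]

lemma invApply_apply (a : TreeAut m) (u : List (Fin m)) : a.invApply (a.apply u) = u := by
  induction u generalizing a with
  | nil => rfl
  | cons x u ih => simp [apply_cons, invApply, ih]

lemma apply_invApply (a : TreeAut m) (u : List (Fin m)) : a.apply (a.invApply u) = u := by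
  induction u generalizing a with
  | nil => rfl
  | cons x u ih => simp [invApply, apply_cons, ih]

instance : Group (TreeAut m) where
  mul_assoc a b c := ext_label fun u => by simp [mul_apply, mul_assoc]
  one_mul a := ext_label fun u => by simp
  mul_one a := ext_label fun u => by simp
  inv_mul_cancel a := ext_label fun u => by simp [invApply_apply]

lemma apply_injective (a : TreeAut m) : Function.Injective a.apply := by
  intro x y h
  have hx := invApply_apply a x
  rw [h, invApply_apply] at hx
  exact hx.symm

@[simp] lemma apply_length (a : TreeAut m) (u : List (Fin m)) :
    (a.apply u).length = u.length := by
  induction u generalizing a with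
  | nil => rfl
  | cons x u ih => simp [apply_cons, ih]

/-- `cons ρ f` is `ρ · ψ₁⁻¹(f 0, …, f (m-1))`: the automorphism with root label `ρ`
and first-layer sections `f x`. -/
def cons (ρ : Equiv.Perm (Fin m)) (f : Fin m → TreeAut m) : TreeAut m :=
  ⟨fun u =>
    match u with
    | [] => ρ
    | x :: v => (f x).label v⟩

end TreeAut

variable {m : ℕ}

/-- The `n`-th layer stabiliser `St_G(n)` of a group `G` of tree automorphisms. -/
def layerStab (G : Subgroup (TreeAut m)) (n : ℕ) : Subgroup (TreeAut m) where
  carrier := {g | g ∈ G ∧ ∀ u : List (Fin m), u.length = n → g.apply u = u}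
  one_mem' := ⟨G.one_mem, fun u _ => TreeAut.one_apply u⟩
  mul_mem' := by
    rintro a b ⟨haG, ha⟩ ⟨hbG, hb⟩
    refine ⟨G.mul_mem haG hbG, fun u hu => ?_⟩
    rw [TreeAut.mul_apply, hb u hu, ha u hu]
  inv_mem' := by
    rintro a ⟨haG, ha⟩
    refine ⟨G.inv_mem haG, fun u hu => ?_⟩
    apply TreeAut.apply_injective a
    rw [← TreeAut.mul_apply, mul_inv_cancel, TreeAut.one_apply, ha u hu]

/-- A group of tree automorphisms acts spherically transitively if it acts
transitively on every layer. -/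
def SphericallyTransitive (G : Subgroup (TreeAut m)) : Prop :=
  ∀ u v : List (Fin m), u.length = v.length → ∃ g ∈ G, g.apply u = v

/-- A group of tree automorphisms is self-similar if it is closed under sections. -/
def SelfSimilar (G : Subgroup (TreeAut m)) : Prop :=
  ∀ g ∈ G, ∀ v : List (Fin m), g.sec v ∈ G

/-- A spherically transitive group is fractal if `st_G(u)|_u = G` for all vertices `u`. -/
def Fractal (G : Subgroup (TreeAut m)) : Prop :=
  SphericallyTransitive G ∧
    ∀ u : List (Fin m),
      {h : TreeAut m | ∃ g ∈ G, g.apply u = u ∧ g.sec u = h} = (G : Set (TreeAut m))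

/-- A spherically transitive group is strongly fractal if `St_G(1)|_x = G` for all `x ∈ X`. -/
def StronglyFractal (G : Subgroup (TreeAut m)) : Prop :=
  SphericallyTransitive G ∧
    ∀ x : Fin m,
      {h : TreeAut m | ∃ g ∈ layerStab G 1, g.sec [x] = h} = (G : Set (TreeAut m))

/-- A spherically transitive group is very strongly fractal if
`St_G(n+1)|_x = St_G(n)` for all `n` and `x ∈ X`. -/
def VeryStronglyFractal (G : Subgroup (TreeAut m)) : Prop :=
  SphericallyTransitive G ∧
    ∀ (n : ℕ) (x : Fin m),
      {h : TreeAut m | ∃ g ∈ layerStab G (n + 1), g.sec [x] = h}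
        = (layerStab G n : Set (TreeAut m))

/-- A group of tree automorphisms is contracting if it has a finite nucleus. -/
def Contracting (G : Subgroup (TreeAut m)) : Prop :=
  ∃ N : Set (TreeAut m), N.Finite ∧ N ⊆ (G : Set (TreeAut m)) ∧
    ∀ g ∈ G, ∃ k : ℕ, ∀ v : List (Fin m), k < v.length → g.sec v ∈ N

/-- A tree automorphism is finite-state if it has finitely many distinct sections. -/
def FiniteState (f : TreeAut m) : Prop :=
  {h : TreeAut m | ∃ u : List (Fin m), f.sec u = h}.Finite

/-- A tree automorphism is bounded if the number of nontrivial sections at the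
`n`-th layer is bounded uniformly in `n`. -/
def BoundedAut (f : TreeAut m) : Prop :=
  ∃ C : ℕ, ∀ n : ℕ, {u : List (Fin m) | u.length = n ∧ f.sec u ≠ 1}.ncard ≤ C

/-- The `n`-th rigid layer stabiliser: the subgroup generated by the rigid vertex
stabilisers of the vertices of the `n`-th layer. -/
def rigidLayerStab (G : Subgroup (TreeAut m)) (n : ℕ) : Subgroup (TreeAut m) :=
  Subgroup.closure {g | g ∈ G ∧ ∃ v : List (Fin m), v.length = n ∧
    ∀ u : List (Fin m), ¬ v <+: u → g.apply u = u}

/-- A weakly branch group: spherically transitive with nontrivial rigid layer stabilisers. -/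
def WeaklyBranch (G : Subgroup (TreeAut m)) : Prop :=
  SphericallyTransitive G ∧ ∀ n : ℕ, rigidLayerStab G n ≠ ⊥

/-- `H` is weakly regular branch over `K ≤ H` if `ψ₁(St_K(1)) ⊇ K × ⋯ × K`. -/
def WeaklyRegularBranchOver (H K : Subgroup (TreeAut m)) : Prop :=
  K ≤ H ∧ ∀ f : Fin m → TreeAut m, (∀ x, f x ∈ K) → TreeAut.cons 1 f ∈ K

/-- The portrait of the `i`-th Basilica monomorphism `β^s_i` applied to `g`,
computed by recursion over vertices. -/
def betaLabel [NeZero m] (s : ℕ) : List (Fin m) → ℕ → TreeAut m → Equiv.Perm (Fin m)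
  | [], i, g => if i = 0 then g.label [] else 1
  | x :: u, i, g =>
      if i = 0 then betaLabel s u (s - 1) (g.sec [x])
      else if x = 0 then betaLabel s u (i - 1) g else 1

/-- The Basilica monomorphism `β^s_i : Aut(T) → Aut(T)`, satisfying
`β_i(g) = ψ₁⁻¹(β_{i-1}(g), 1, …, 1)` for `1 ≤ i ≤ s-1` and
`β_0(g) = g|^ε · ψ₁⁻¹(β_{s-1}(g|_0), …, β_{s-1}(g|_{m-1}))`. -/
def betaAut [NeZero m] (s i : ℕ) (g : TreeAut m) : TreeAut m := ⟨fun u => betaLabel s u i g⟩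

/-- The `s`-th Basilica group of `G`. -/
def basilica [NeZero m] (s : ℕ) (G : Subgroup (TreeAut m)) : Subgroup (TreeAut m) :=
  Subgroup.closure {b | ∃ g ∈ G, ∃ i < s, b = betaAut s i g}

/-- The subgroup `S_i = ⟨β_j(G) : j ≠ i⟩` of the `s`-th Basilica group. -/
def Ssub [NeZero m] (s i : ℕ) (G : Subgroup (TreeAut m)) : Subgroup (TreeAut m) :=
  Subgroup.closure {b | ∃ g ∈ G, ∃ j < s, j ≠ i ∧ b = betaAut s j g}

/-- The normal closure `N_i` of `S_i` in the `s`-th Basilica group of `G`. -/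
def Nsub [NeZero m] (s i : ℕ) (G : Subgroup (TreeAut m)) : Subgroup (TreeAut m) :=
  Subgroup.closure {x | ∃ b ∈ basilica s G, ∃ y ∈ Ssub s i G, x = b * y * b⁻¹}

/-- The `i`-th splitting kernel `K_i = β_i⁻¹(β_i(G) ∩ N_i)` of `G`, as a set. -/
def Kset [NeZero m] (s i : ℕ) (G : Subgroup (TreeAut m)) : Set (TreeAut m) :=
  {g | g ∈ G ∧ betaAut s i g ∈ Nsub s i G}

/-- The portrait of the monomorphism `π_i` (for the `d`-fold diagonal construction). -/
def piLabel (d : ℕ) : List (Fin m) → ℕ → TreeAut m → Equiv.Perm (Fin m)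
  | [], i, g => if i = 0 then g.label [] else 1
  | x :: u, i, g =>
      if i = 0 then piLabel d u (d - 1) (g.sec [x])
      else piLabel d u (i - 1) g

/-- The monomorphism `π_i : Aut(T) → Aut(T)`, satisfying
`π_0(g) = g|^ε · ψ₁⁻¹(π_{d-1}(g|_0), …, π_{d-1}(g|_{m-1}))` and
`π_i(g) = ψ₁⁻¹(π_{i-1}(g), …, π_{i-1}(g))` for `1 ≤ i ≤ d-1`. -/
def piAut (d i : ℕ) (g : TreeAut m) : TreeAut m := ⟨fun u => piLabel d u i g⟩

/-- The generator of the `m`-adic odometer: `a = σ · ψ₁⁻¹(a, 1, …, 1)` with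
`σ = (0 1 … m-1)`. -/
def odometer (m : ℕ) [NeZero m] : TreeAut m :=
  ⟨fun u => if ∀ x ∈ u, x = 0 then finRotate m else 1⟩

/-- The group `O_m^d = D_d(O_m) = ⟨π_i(a) : 0 ≤ i ≤ d-1⟩`. -/
def OdPow (m d : ℕ) [NeZero m] : Subgroup (TreeAut m) :=
  Subgroup.closure {x | ∃ i < d, x = piAut d i (odometer m)}

/-- The group `Γ` of all automorphisms all of whose labels are powers of the
cycle `σ = (0 1 … m-1)`. -/
def Gamma (m : ℕ) : Subgroup (TreeAut m) where
  carrier := {g | ∀ u : List (Fin m), g.label u ∈ Subgroup.zpowers (finRotate m)}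
  one_mem' := by
    intro u
    rw [TreeAut.one_label]
    exact one_mem _
  mul_mem' := by
    intro a b ha hb u
    rw [TreeAut.mul_label]
    exact mul_mem (ha _) (hb _)
  inv_mem' := by
    intro a ha u
    rw [TreeAut.inv_label]
    exact inv_mem (ha _)

/-- The Hausdorff dimension of `G ≤ Γ` relative to `Γ`. -/
noncomputable def hdim (m : ℕ) (G : Subgroup (TreeAut m)) : ℝ :=
  Filter.liminf (fun n : ℕ =>
    Real.logb m ((layerStab G n).relIndex G) /
      Real.logb m ((layerStab (Gamma m) n).relIndex (Gamma m))) Filter.atTop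

/-- The series of obstructions `o_G(n) = m·log_m|L_G(n-1)| - log_m|L_G(n)|` (for `n ≥ 1`),
where `L_G(n) = St_G(n)/St_G(n+1)`. -/
noncomputable def obstruction (m : ℕ) (G : Subgroup (TreeAut m)) (n : ℕ) : ℝ :=
  m * Real.logb m ((layerStab G n).relIndex (layerStab G (n - 1)))
    - Real.logb m ((layerStab G (n + 1)).relIndex (layerStab G n))

/-- The permutation group induced by `G` on the first layer acts regularly on `X`. -/
def RegularRootAction (G : Subgroup (TreeAut m)) : Prop :=
  (∀ x y : Fin m, ∃ g ∈ G, g.label [] x = y) ∧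
    ∀ g ∈ G, ∀ x : Fin m, g.label [] x = x → g.label [] = 1

/-! Sections of a product or inverse are products or inverses of sections, so closure under
sections passes from a generating set to the group. The section of `β_i(g)` at a letter is
`β_{i-1}(g)`, `β_{s-1}(g|_x)` or trivial, so by induction along the word every section of a
generator of `Bas_s(G)` lies in `Bas_s(G)` when `G` is self-similar. -/

namespace TreeAut

lemma inv_sec (a : TreeAut m) (v : List (Fin m)) : a⁻¹.sec v = (a.sec (a⁻¹.apply v))⁻¹ :=
  eq_inv_of_mul_eq_one_right <| by rw [← mul_sec, mul_inv_cancel, one_sec]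

end TreeAut

lemma selfSimilar_closure {S : Set (TreeAut m)}
    (hS : ∀ g ∈ S, ∀ v : List (Fin m), g.sec v ∈ Subgroup.closure S) :
    SelfSimilar (Subgroup.closure S) := by
  intro g hg
  induction hg using Subgroup.closure_induction with
  | mem g hg => exact hS g hg
  | one => simp
  | mul a b _ _ ha hb =>
    intro v
    rw [TreeAut.mul_sec]
    exact mul_mem (ha _) (hb _)
  | inv a _ ha =>
    intro v
    rw [TreeAut.inv_sec]
    exact inv_mem (ha _)

section Beta

variable [NeZero m] (s : ℕ) (g : TreeAut m)

lemma betaAut_zero_sec_singleton (x : Fin m) :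
    (betaAut s 0 g).sec [x] = betaAut s (s - 1) (g.sec [x]) :=
  TreeAut.ext_label fun _ => by simp [betaAut, betaLabel]

variable {s} {i : ℕ}

lemma betaAut_sec_singleton_zero (hi : i ≠ 0) : (betaAut s i g).sec [0] = betaAut s (i - 1) g :=
  TreeAut.ext_label fun _ => by simp [betaAut, betaLabel, hi]

lemma betaAut_sec_singleton_of_ne_zero (hi : i ≠ 0) {x : Fin m} (hx : x ≠ 0) :
    (betaAut s i g).sec [x] = 1 :=
  TreeAut.ext_label fun _ => by simp [betaAut, betaLabel, hi, hx]

end Beta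

lemma betaAut_sec_mem_basilica [NeZero m] {s : ℕ} {G : Subgroup (TreeAut m)}
    (hG : SelfSimilar G) (v : List (Fin m)) {g : TreeAut m} (hg : g ∈ G) {i : ℕ} (hi : i < s) :
    (betaAut s i g).sec v ∈ basilica s G := by
  induction v generalizing g i with
  | nil => exact Subgroup.subset_closure ⟨g, hg, i, hi, rfl⟩
  | cons x v ih =>
    rw [← List.singleton_append, ← TreeAut.sec_sec]
    obtain rfl | hi0 := eq_or_ne i 0
    · rw [betaAut_zero_sec_singleton]
      exact ih (hG g hg [x]) (by omega)
    by_cases hx : x = 0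
    · rw [hx, betaAut_sec_singleton_zero g hi0]
      exact ih hg (by omega)
    · rw [betaAut_sec_singleton_of_ne_zero g hi0 hx, TreeAut.one_sec]
      exact one_mem _

theorem basilica_selfSimilar_general {m : ℕ} [NeZero m]
    (G : Subgroup (TreeAut m)) (hG : SelfSimilar G)
    (s : ℕ) :
    SelfSimilar (basilica s G) :=
  selfSimilar_closure <| by
    rintro _ ⟨g, hg, i, hi, rfl⟩ v
    exact betaAut_sec_mem_basilica hG v hg hi

/-- If `G ≤ Aut(T)` is self-similar, then for every `s ≥ 1` the
`s`-th Basilica group `Bas_s(G)` is self-similar. -/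
theorem basilica_selfSimilar {m : ℕ} [NeZero m] (hm : 2 ≤ m)
    (G : Subgroup (TreeAut m)) (hG : SelfSimilar G)
    (s : ℕ) (hs : 1 ≤ s) :
    SelfSimilar (basilica s G) :=
  basilica_selfSimilar_general G hG s

end Basilica
end

section
/- Let G ≤ Aut(T) be self-similar and fractal (respectively, self-similar and strongly fractal), and let s ≥ 1. Then: (i) the group B = Bas_s(G) is fractal (respectively, strongly fractal); and (ii) for every b ∈ B there exists an element c in the stabiliser st_B(0) of the vertex 0 (respectively, in St_B(1)) such that c|_0 = b and c|_x ∈ β_{s−1}(G) for all x ∈ {1,…,m−1}. -/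
/-!
Groups of automorphisms of the `m`-regular rooted tree, encoded via portraits:
an automorphism is determined by the family of its labels (local actions)
`label : List (Fin m) → Equiv.Perm (Fin m)`.
-/

namespace Basilica

variable {m : ℕ}

/-!
The generators `β_i(g)`, `i ≥ 1`, fix the first layer and have `β_{i-1}(g)` as their only
nontrivial first-layer section, at `0`; the remaining generators `β_{s-1}(g)` are recovered as
`0`-sections of `β_0(g')` for any `g'` with `g'|_0 = g`, and fractality (resp. strong fractality)
of `G` lets one choose `g'` in `st_G(0)` (resp. `St_G(1)`). As taking the `0`-section is
multiplicative on `st(0)`, every `b ∈ B` is the `0`-section of some `c` in `st_B(0)`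
(resp. `St_B(1)`), whose other first-layer sections lie in `β_{s-1}(G)`. Conjugating by elements
of `B` moving `0` to `x` (the `β_0(g)` do, as `G` is transitive on `X`) transports this to every
first-layer vertex, and induction on the length of words gives spherical transitivity and
fractality at every vertex.
-/

namespace TreeAut

lemma apply_singleton (a : TreeAut m) (x : Fin m) : a.apply [x] = [a.label [] x] := rfl

lemma label_nil_of_apply_singleton {a : TreeAut m} {x y : Fin m} (h : a.apply [x] = [y]) :
    a.label [] x = y :=
  List.singleton_inj.mp h

lemma label_nil_ne_of_apply_singleton {a : TreeAut m} {x y : Fin m} (h : a.apply [y] = [y])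
    (hxy : x ≠ y) : a.label [] x ≠ y := fun hx =>
  hxy ((a.label []).injective (hx.trans (label_nil_of_apply_singleton h).symm))

lemma apply_cons_of_apply_singleton {a : TreeAut m} {x y : Fin m} (h : a.apply [x] = [y])
    (w : List (Fin m)) : a.apply (x :: w) = y :: (a.sec [x]).apply w := by
  rw [apply_cons, label_nil_of_apply_singleton h]

lemma sec_cons (a : TreeAut m) (x : Fin m) (v : List (Fin m)) :
    a.sec (x :: v) = (a.sec [x]).sec v := by
  rw [sec_sec]
  rfl

lemma apply_inv_apply (a : TreeAut m) (v : List (Fin m)) : a.apply (a⁻¹.apply v) = v := by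
  rw [← mul_apply, mul_inv_cancel, one_apply]

lemma inv_apply_apply (a : TreeAut m) (v : List (Fin m)) : a⁻¹.apply (a.apply v) = v := by
  rw [← mul_apply, inv_mul_cancel, one_apply]

lemma inv_apply_of_apply_eq {a : TreeAut m} {v w : List (Fin m)} (h : a.apply v = w) :
    a⁻¹.apply w = v := by
  rw [← h, inv_apply_apply]

lemma mul_sec_of_apply_eq {a b : TreeAut m} {v : List (Fin m)} (hb : b.apply v = v) :
    (a * b).sec v = a.sec v * b.sec v := by
  rw [mul_sec, hb]

lemma inv_sec_of_apply_eq {a : TreeAut m} {v : List (Fin m)} (ha : a.apply v = v) :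
    a⁻¹.sec v = (a.sec v)⁻¹ := by
  rw [inv_sec, inv_apply_of_apply_eq ha]

lemma conj_apply_sec {t c : TreeAut m} {v w : List (Fin m)} (ht : t.apply v = w)
    (hc : c.apply v = v) :
    (t * c * t⁻¹).apply w = w ∧
      (t * c * t⁻¹).sec w = t.sec v * c.sec v * (t.sec v)⁻¹ := by
  have hti := inv_apply_of_apply_eq ht
  refine ⟨by rw [mul_apply, mul_apply, hti, hc, ht], ?_⟩
  rw [mul_sec, mul_sec, hti, hc, inv_sec, hti, mul_assoc]

end TreeAut

open TreeAut

def vertexStab (v : List (Fin m)) : Subgroup (TreeAut m) where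
  carrier := {c | c.apply v = v}
  one_mem' := one_apply v
  mul_mem' {a b} (ha : a.apply v = v) (hb : b.apply v = v) :=
    show (a * b).apply v = v by rw [mul_apply, hb, ha]
  inv_mem' ha := inv_apply_of_apply_eq ha

lemma mem_layerStab_one {H : Subgroup (TreeAut m)} {g : TreeAut m} :
    g ∈ layerStab H 1 ↔ g ∈ H ∧ g.label [] = 1 := by
  refine and_congr_right fun _ =>
    ⟨fun h => Equiv.ext fun x => label_nil_of_apply_singleton (h [x] rfl), fun h u hu => ?_⟩
  obtain ⟨x, rfl⟩ := List.length_eq_one_iff.mp hu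
  rw [apply_singleton, h]
  rfl

lemma conj_mem_layerStab {H : Subgroup (TreeAut m)} {n : ℕ} {t c : TreeAut m} (ht : t ∈ H)
    (hc : c ∈ layerStab H n) : t * c * t⁻¹ ∈ layerStab H n :=
  ⟨H.mul_mem (H.mul_mem ht hc.1) (H.inv_mem ht), fun u hu => by
    rw [mul_apply, mul_apply, hc.2 _ (by rw [apply_length, hu]), apply_inv_apply]⟩

lemma selfSimilar_of_sec_singleton_mem {H : Subgroup (TreeAut m)}
    (h : ∀ b ∈ H, ∀ x : Fin m, b.sec [x] ∈ H) : SelfSimilar H := by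
  intro b hb v
  induction v generalizing b with
  | nil => exact hb
  | cons x v ih =>
    rw [sec_cons]
    exact ih _ (h b hb x)

section Fractality

variable (H : Subgroup (TreeAut m))

def FirstLayerTransitive : Prop :=
  ∀ x y : Fin m, ∃ t ∈ H, t.apply [x] = [y]

def FractalAt (u : List (Fin m)) : Prop :=
  ∀ b ∈ H, ∃ c ∈ H, c.apply u = u ∧ c.sec u = b

def StronglyFractalAt (x : Fin m) : Prop :=
  ∀ b ∈ H, ∃ c ∈ layerStab H 1, c.sec [x] = b

variable {H}

lemma SphericallyTransitive.firstLayerTransitive (h : SphericallyTransitive H) :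
    FirstLayerTransitive H :=
  fun x y => h [x] [y] rfl

lemma Fractal.fractalAt (h : Fractal H) (u : List (Fin m)) : FractalAt H u := by
  intro b hb
  rwa [← SetLike.mem_coe, ← h.2 u] at hb

lemma StronglyFractal.stronglyFractalAt (h : StronglyFractal H) (x : Fin m) :
    StronglyFractalAt H x := by
  intro b hb
  rwa [← SetLike.mem_coe, ← h.2 x] at hb

lemma StronglyFractalAt.fractalAt {x : Fin m} (h : StronglyFractalAt H x) : FractalAt H [x] :=
  fun b hb =>
    let ⟨c, hc, hcb⟩ := h b hb
    ⟨c, hc.1, hc.2 [x] rfl, hcb⟩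

lemma FractalAt.of_firstLayerTransitive (hss : SelfSimilar H) (htr : FirstLayerTransitive H)
    {x₀ : Fin m} (h : FractalAt H [x₀]) (x : Fin m) : FractalAt H [x] := by
  intro b hb
  obtain ⟨t, ht, htx⟩ := htr x₀ x
  have hτ : t.sec [x₀] ∈ H := hss t ht [x₀]
  obtain ⟨c, hc, hcx₀, hcb⟩ :=
    h ((t.sec [x₀])⁻¹ * b * t.sec [x₀]) (H.mul_mem (H.mul_mem (H.inv_mem hτ) hb) hτ)
  obtain ⟨hfix, hsec⟩ := conj_apply_sec htx hcx₀
  refine ⟨t * c * t⁻¹, H.mul_mem (H.mul_mem ht hc) (H.inv_mem ht), hfix, ?_⟩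
  rw [hsec, hcb]
  group

lemma StronglyFractalAt.of_firstLayerTransitive (hss : SelfSimilar H)
    (htr : FirstLayerTransitive H) {x₀ : Fin m} (h : StronglyFractalAt H x₀) (x : Fin m) :
    StronglyFractalAt H x := by
  intro b hb
  obtain ⟨t, ht, htx⟩ := htr x₀ x
  have hτ : t.sec [x₀] ∈ H := hss t ht [x₀]
  obtain ⟨c, hc, hcb⟩ :=
    h ((t.sec [x₀])⁻¹ * b * t.sec [x₀]) (H.mul_mem (H.mul_mem (H.inv_mem hτ) hb) hτ)
  refine ⟨t * c * t⁻¹, conj_mem_layerStab ht hc, ?_⟩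
  rw [(conj_apply_sec htx (hc.2 [x₀] rfl)).2, hcb]
  group

lemma sphericallyTransitive_of_fractalAt (htr : FirstLayerTransitive H)
    (h : ∀ x : Fin m, FractalAt H [x]) : SphericallyTransitive H := by
  intro u v huv
  induction v generalizing u with
  | nil =>
    rw [List.length_eq_zero_iff.mp huv]
    exact ⟨1, H.one_mem, rfl⟩
  | cons y v ih =>
    obtain _ | ⟨x, u⟩ := u
    · exact absurd huv.symm (List.cons_ne_nil _ _ ∘ List.length_eq_zero_iff.mp)
    obtain ⟨t, ht, htx⟩ := htr x y
    obtain ⟨b, hb, hbv⟩ := ih ((t.sec [x]).apply u) (by simpa using huv)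
    obtain ⟨c, hc, hcy, hcb⟩ := h y b hb
    refine ⟨c * t, H.mul_mem hc ht, ?_⟩
    rw [mul_apply, apply_cons_of_apply_singleton htx, apply_cons_of_apply_singleton hcy, hcb, hbv]

lemma fractalAt_of_forall_fractalAt_singleton (h : ∀ x : Fin m, FractalAt H [x]) :
    ∀ u : List (Fin m), FractalAt H u := by
  intro u
  induction u with
  | nil => exact fun b hb => ⟨b, hb, rfl, rfl⟩
  | cons x u ih =>
    intro b hb
    obtain ⟨g, hg, hgu, hgb⟩ := ih b hb
    obtain ⟨c, hc, hcx, hcg⟩ := h x g hg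
    refine ⟨c, hc, ?_, ?_⟩
    · rw [apply_cons_of_apply_singleton hcx, hcg, hgu]
    · rw [sec_cons, hcg, hgb]

theorem fractal_of_fractalAt (hss : SelfSimilar H) (htr : FirstLayerTransitive H) {x₀ : Fin m}
    (h : FractalAt H [x₀]) : Fractal H := by
  have hfr := fractalAt_of_forall_fractalAt_singleton (h.of_firstLayerTransitive hss htr)
  refine ⟨sphericallyTransitive_of_fractalAt htr fun x => hfr [x], fun u => ?_⟩
  refine Set.Subset.antisymm ?_ fun b hb => hfr u b hb
  rintro _ ⟨g, hg, -, rfl⟩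
  exact hss g hg u

theorem stronglyFractal_of_stronglyFractalAt (hss : SelfSimilar H)
    (htr : FirstLayerTransitive H) {x₀ : Fin m} (h : StronglyFractalAt H x₀) :
    StronglyFractal H := by
  have hsf := h.of_firstLayerTransitive hss htr
  refine ⟨sphericallyTransitive_of_fractalAt htr fun x => (hsf x).fractalAt, fun x => ?_⟩
  refine Set.Subset.antisymm ?_ fun b hb => hsf x b hb
  rintro _ ⟨g, hg, rfl⟩
  exact hss g hg.1 [x]

end Fractality

section BasilicaGroup

variable [NeZero m] {s i : ℕ}

lemma betaAut_zero_apply_singleton (g : TreeAut m) (x : Fin m) :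
    (betaAut s 0 g).apply [x] = g.apply [x] := rfl

lemma betaAut_zero_sec (g : TreeAut m) (x : Fin m) :
    (betaAut s 0 g).sec [x] = betaAut s (s - 1) (g.sec [x]) := rfl

lemma betaAut_label_nil_of_ne_zero (hi : i ≠ 0) (g : TreeAut m) :
    (betaAut s i g).label [] = 1 :=
  if_neg hi

lemma betaAut_apply_singleton_of_ne_zero (hi : i ≠ 0) (g : TreeAut m) (x : Fin m) :
    (betaAut s i g).apply [x] = [x] := by
  rw [apply_singleton, betaAut_label_nil_of_ne_zero hi]
  rfl

lemma betaAut_sec_zero_of_ne_zero (hi : i ≠ 0) (g : TreeAut m) :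
    (betaAut s i g).sec [0] = betaAut s (i - 1) g :=
  ext_label fun u => by
    change betaLabel s (0 :: u) i g = betaLabel s u (i - 1) g
    simp [betaLabel, hi]

lemma betaAut_sec_of_ne_zero (hi : i ≠ 0) (g : TreeAut m) {x : Fin m} (hx : x ≠ 0) :
    (betaAut s i g).sec [x] = 1 :=
  ext_label fun u => by
    change betaLabel s (x :: u) i g = 1
    simp [betaLabel, hi, hx]

lemma betaAut_mul (s i : ℕ) (g h : TreeAut m) :
    betaAut s i (g * h) = betaAut s i g * betaAut s i h := by
  suffices ∀ (u : List (Fin m)) (i : ℕ) (g h : TreeAut m),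
      (betaAut s i (g * h)).label u = (betaAut s i g * betaAut s i h).label u from
    ext_label fun u => this u i g h
  intro u
  induction u with
  | nil =>
    intro i g h
    obtain rfl | hi := eq_or_ne i 0
    · rfl
    · simp [betaAut_label_nil_of_ne_zero hi]
  | cons x u ih =>
    intro i g h
    change ((betaAut s i (g * h)).sec [x]).label u =
      ((betaAut s i g * betaAut s i h).sec [x]).label u
    rw [mul_sec, apply_singleton]
    obtain rfl | hi := eq_or_ne i 0
    · rw [betaAut_zero_sec, betaAut_zero_sec, betaAut_zero_sec, mul_sec, apply_singleton]
      exact ih _ _ _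
    rw [betaAut_label_nil_of_ne_zero hi, Equiv.Perm.one_apply]
    obtain rfl | hx := eq_or_ne x 0
    · simp only [betaAut_sec_zero_of_ne_zero hi]
      exact ih _ _ _
    · simp only [betaAut_sec_of_ne_zero hi _ hx, mul_one]

variable (s i) in
def betaHom : TreeAut m →* TreeAut m :=
  MonoidHom.mk' (betaAut s i) (betaAut_mul s i)

lemma betaAut_mem_basilica {G : Subgroup (TreeAut m)} {g : TreeAut m} (hg : g ∈ G)
    (hi : i < s) : betaAut s i g ∈ basilica s G :=
  Subgroup.subset_closure ⟨g, hg, i, hi, rfl⟩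

variable {G : Subgroup (TreeAut m)}

lemma sec_singleton_mem_basilica (hss : SelfSimilar G) (hs : 1 ≤ s) {b : TreeAut m}
    (hb : b ∈ basilica s G) (x : Fin m) : b.sec [x] ∈ basilica s G := by
  induction hb using Subgroup.closure_induction generalizing x with
  | mem b hb =>
    obtain ⟨g, hg, i, hi, rfl⟩ := hb
    obtain rfl | hi0 := eq_or_ne i 0
    · rw [betaAut_zero_sec]
      exact betaAut_mem_basilica (hss g hg [x]) (by omega)
    obtain rfl | hx := eq_or_ne x 0
    · rw [betaAut_sec_zero_of_ne_zero hi0]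
      exact betaAut_mem_basilica hg (by omega)
    · rw [betaAut_sec_of_ne_zero hi0 g hx]
      exact one_mem _
  | one => exact one_mem _
  | mul a b _ _ ha hb =>
    rw [mul_sec, apply_singleton]
    exact mul_mem (ha _) (hb _)
  | inv a _ ha =>
    rw [inv_sec, apply_singleton]
    exact inv_mem (ha _)

lemma basilica_selfSimilar_s2 (hss : SelfSimilar G) (hs : 1 ≤ s) : SelfSimilar (basilica s G) :=
  selfSimilar_of_sec_singleton_mem fun _ hb => sec_singleton_mem_basilica hss hs hb

lemma basilica_firstLayerTransitive (hs : 1 ≤ s) (htr : FirstLayerTransitive G) :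
    FirstLayerTransitive (basilica s G) := fun x y =>
  let ⟨g, hg, hgxy⟩ := htr x y
  ⟨betaAut s 0 g, betaAut_mem_basilica hg hs, (betaAut_zero_apply_singleton g x).trans hgxy⟩

theorem exists_sec_zero_eq_of_mem_basilica (hss : SelfSimilar G) {Q : Subgroup (TreeAut m)}
    (hQ : Q ≤ vertexStab [0])
    (hβ : ∀ g ∈ G, ∀ i, i ≠ 0 → i < s → betaAut s i g ∈ Q)
    (hβ₀ : ∀ g ∈ G, ∃ g' ∈ G, betaAut s 0 g' ∈ Q ∧ g'.sec [0] = g)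
    {b : TreeAut m} (hb : b ∈ basilica s G) :
    ∃ c ∈ Q, c.sec [0] = b ∧
      ∀ x : Fin m, x ≠ 0 → ∃ g ∈ G, c.sec [x] = betaAut s (s - 1) g := by
  suffices ∃ c ∈ Q, c.sec [0] = b ∧
      ∀ x : Fin m, x ≠ 0 → c.sec [x] ∈ G.map (betaHom s (s - 1)) by
    obtain ⟨c, hc, hc0, hcx⟩ := this
    refine ⟨c, hc, hc0, fun x hx => ?_⟩
    obtain ⟨g, hg, hgc⟩ := Subgroup.mem_map.mp (hcx x hx)
    exact ⟨g, hg, hgc.symm⟩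
  induction hb using Subgroup.closure_induction with
  | mem b hb =>
    obtain ⟨g, hg, i, hi, rfl⟩ := hb
    -- `β_i g` is the `0`-section of `β_{i+1} g`, or of `β_0 g'` when `i = s - 1`
    obtain hi' | rfl : i + 1 < s ∨ i = s - 1 := by omega
    · refine ⟨betaAut s (i + 1) g, hβ g hg _ (Nat.add_one_ne_zero i) hi', ?_, fun x hx => ?_⟩
      · rw [betaAut_sec_zero_of_ne_zero (Nat.add_one_ne_zero i), Nat.add_sub_cancel]
      · rw [betaAut_sec_of_ne_zero (Nat.add_one_ne_zero i) g hx]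
        exact one_mem _
    · obtain ⟨g', hg', hg'Q, hg'g⟩ := hβ₀ g hg
      refine ⟨betaAut s 0 g', hg'Q, by rw [betaAut_zero_sec, hg'g], fun x _ => ?_⟩
      exact Subgroup.mem_map_of_mem _ (hss g' hg' [x])
  | one => exact ⟨1, one_mem _, rfl, fun _ _ => one_mem _⟩
  | mul b₁ b₂ _ _ ih₁ ih₂ =>
    obtain ⟨c₁, hc₁, hc₁0, hc₁x⟩ := ih₁
    obtain ⟨c₂, hc₂, hc₂0, hc₂x⟩ := ih₂
    refine ⟨c₁ * c₂, mul_mem hc₁ hc₂,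
      by rw [mul_sec_of_apply_eq (hQ hc₂), hc₁0, hc₂0], fun x hx => ?_⟩
    rw [mul_sec, apply_singleton]
    exact mul_mem (hc₁x _ (label_nil_ne_of_apply_singleton (hQ hc₂) hx)) (hc₂x x hx)
  | inv b _ ih =>
    obtain ⟨c, hc, hc0, hcx⟩ := ih
    refine ⟨c⁻¹, inv_mem hc, by rw [inv_sec_of_apply_eq (hQ hc), hc0], fun x hx => ?_⟩
    rw [inv_sec, apply_singleton]
    exact inv_mem (hcx _ (label_nil_ne_of_apply_singleton (hQ (inv_mem hc)) hx))

theorem exists_sec_zero_eq_of_fractal (hss : SelfSimilar G) (hs : 1 ≤ s) (hf : Fractal G)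
    {b : TreeAut m} (hb : b ∈ basilica s G) :
    ∃ c ∈ basilica s G, c.apply [0] = [0] ∧ c.sec [0] = b ∧
      ∀ x : Fin m, x ≠ 0 → ∃ g ∈ G, c.sec [x] = betaAut s (s - 1) g := by
  obtain ⟨c, ⟨hcB, hc0⟩, hcb⟩ := exists_sec_zero_eq_of_mem_basilica hss
    (Q := basilica s G ⊓ vertexStab [0]) inf_le_right
    (fun g hg i hi0 hi =>
      ⟨betaAut_mem_basilica hg hi, betaAut_apply_singleton_of_ne_zero hi0 g 0⟩)
    (fun g hg => by
      obtain ⟨g', hg', hg'0, hg'g⟩ := hf.fractalAt [0] g hg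
      exact ⟨g', hg',
        ⟨betaAut_mem_basilica hg' hs, (betaAut_zero_apply_singleton g' 0).trans hg'0⟩, hg'g⟩)
    hb
  exact ⟨c, hcB, hc0, hcb⟩

theorem exists_sec_zero_eq_of_stronglyFractal (hss : SelfSimilar G) (hs : 1 ≤ s)
    (hf : StronglyFractal G) {b : TreeAut m} (hb : b ∈ basilica s G) :
    ∃ c ∈ layerStab (basilica s G) 1, c.sec [0] = b ∧
      ∀ x : Fin m, x ≠ 0 → ∃ g ∈ G, c.sec [x] = betaAut s (s - 1) g :=
  exists_sec_zero_eq_of_mem_basilica hss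
    (fun c (hc : c ∈ layerStab (basilica s G) 1) => hc.2 [0] rfl)
    (fun g hg i hi0 hi => mem_layerStab_one.mpr
      ⟨betaAut_mem_basilica hg hi, betaAut_label_nil_of_ne_zero hi0 g⟩)
    (fun g hg => by
      obtain ⟨g', hg', hg'g⟩ := hf.stronglyFractalAt 0 g hg
      exact ⟨g', hg'.1, mem_layerStab_one.mpr
        ⟨betaAut_mem_basilica hg'.1 hs, (mem_layerStab_one.mp hg').2⟩, hg'g⟩)
    hb

end BasilicaGroup

theorem basilica_fractal_general {m : ℕ} [NeZero m]
    (G : Subgroup (TreeAut m)) (hss : SelfSimilar G)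
    (s : ℕ) (hs : 1 ≤ s) :
    (Fractal G →
      Fractal (basilica s G) ∧
      ∀ b ∈ basilica s G, ∃ c ∈ basilica s G,
        c.apply [(0 : Fin m)] = [(0 : Fin m)] ∧ c.sec [(0 : Fin m)] = b ∧
        ∀ x : Fin m, x ≠ 0 → ∃ g ∈ G, c.sec [x] = betaAut s (s - 1) g) ∧
    (StronglyFractal G →
      StronglyFractal (basilica s G) ∧
      ∀ b ∈ basilica s G, ∃ c ∈ layerStab (basilica s G) 1,
        c.sec [(0 : Fin m)] = b ∧
        ∀ x : Fin m, x ≠ 0 → ∃ g ∈ G, c.sec [x] = betaAut s (s - 1) g) := by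
  have hBss := basilica_selfSimilar_s2 hss hs
  refine ⟨fun hf => ⟨?_, fun b => exists_sec_zero_eq_of_fractal hss hs hf⟩,
    fun hf => ⟨?_, fun b => exists_sec_zero_eq_of_stronglyFractal hss hs hf⟩⟩
  · refine fractal_of_fractalAt hBss
      (basilica_firstLayerTransitive hs hf.1.firstLayerTransitive) (x₀ := 0) fun b hb => ?_
    obtain ⟨c, hcB, hc0, hcb, -⟩ := exists_sec_zero_eq_of_fractal hss hs hf hb
    exact ⟨c, hcB, hc0, hcb⟩
  · refine stronglyFractal_of_stronglyFractalAt hBss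
      (basilica_firstLayerTransitive hs hf.1.firstLayerTransitive) (x₀ := 0) fun b hb => ?_
    obtain ⟨c, hc, hcb, -⟩ := exists_sec_zero_eq_of_stronglyFractal hss hs hf hb
    exact ⟨c, hc, hcb⟩

/-- Let `G ≤ Aut(T)` be self-similar and fractal (resp. strongly fractal)
and `s ≥ 1`. Then (i) `B = Bas_s(G)` is fractal (resp. strongly fractal); (ii) for every
`b ∈ B` there is `c ∈ st_B(0)` (resp. `c ∈ St_B(1)`) with `c|_0 = b` and
`c|_x ∈ β_{s-1}(G)` for all `x ∈ {1, …, m-1}`. -/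
theorem basilica_fractal {m : ℕ} [NeZero m] (hm : 2 ≤ m)
    (G : Subgroup (TreeAut m)) (hss : SelfSimilar G)
    (s : ℕ) (hs : 1 ≤ s) :
    (Fractal G →
      Fractal (basilica s G) ∧
      ∀ b ∈ basilica s G, ∃ c ∈ basilica s G,
        c.apply [(0 : Fin m)] = [(0 : Fin m)] ∧ c.sec [(0 : Fin m)] = b ∧
        ∀ x : Fin m, x ≠ 0 → ∃ g ∈ G, c.sec [x] = betaAut s (s - 1) g) ∧
    (StronglyFractal G →
      StronglyFractal (basilica s G) ∧
      ∀ b ∈ basilica s G, ∃ c ∈ layerStab (basilica s G) 1,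
        c.sec [(0 : Fin m)] = b ∧
        ∀ x : Fin m, x ≠ 0 → ∃ g ∈ G, c.sec [x] = betaAut s (s - 1) g) :=
  basilica_fractal_general G hss s hs

end Basilica
end

section
/- Let G ≤ Aut(T) be generated by finite-state bounded automorphisms. Then for every integer s ≥ 1 the s-th Basilica group Bas_s(G) is also generated by finite-state bounded automorphisms; indeed, for every finite-state bounded f ∈ Aut(T) and every i ∈ {0,…,s−1}, the element β_i(f) is finite-state and bounded. -/
/-!
Groups of automorphisms of the `m`-regular rooted tree, encoded via portraits:
an automorphism is determined by the family of its labels (local actions)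
`label : List (Fin m) → Equiv.Perm (Fin m)`.
-/

namespace Basilica

variable {m : ℕ}

/-!
Reading a vertex `u` through `β_i(g)` is a walk through the states `0, …, s-1`: in a state
`i ≠ 0` a letter `0` moves to state `i - 1` and any other letter kills the section, while
in state `0` the letter is handed to `g` and the walk moves to state `s - 1`. So every section
of `β_i(g)` is trivial or of the form `β_j(g|_w)`, where the word `w = betaCore s i u` of the
letters handed to `g` has a length depending only on `i` and `|u|`, and `u ↦ w` is injective
on each layer. Hence `β_i(g)` has finitely many sections when `g` has, and its nontrivial
sections on the `n`-th layer inject into those of `g` on a single layer. Finally, finite-state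
bounded automorphisms form a subgroup, so all generators `β_i(g)`, `g ∈ G`, of `Bas_s(G)` are
finite-state and bounded.
-/

namespace TreeAut

lemma sec_inv (a : TreeAut m) (u : List (Fin m)) :
    a⁻¹.sec u = (a.sec (a.invApply u))⁻¹ := by
  have h := mul_sec a⁻¹ a (a.invApply u)
  rw [inv_mul_cancel, one_sec, apply_invApply] at h
  exact eq_inv_of_mul_eq_one_left h.symm

lemma invApply_length (a : TreeAut m) (u : List (Fin m)) :
    (a.invApply u).length = u.length := by
  rw [← apply_length a, apply_invApply]

lemma invApply_injective (a : TreeAut m) : Function.Injective a.invApply :=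
  Function.LeftInverse.injective (apply_invApply a)

end TreeAut

open TreeAut

section FiniteStateBounded

lemma finiteState_one : FiniteState (1 : TreeAut m) :=
  (Set.finite_singleton 1).subset <| by rintro _ ⟨u, rfl⟩; rfl

lemma finiteState_mul {a b : TreeAut m} (ha : FiniteState a) (hb : FiniteState b) :
    FiniteState (a * b) :=
  (ha.image2 (· * ·) hb).subset <| by
    rintro _ ⟨u, rfl⟩
    exact ⟨_, ⟨b.apply u, rfl⟩, _, ⟨u, rfl⟩, (mul_sec a b u).symm⟩

lemma finiteState_inv {a : TreeAut m} (ha : FiniteState a) : FiniteState a⁻¹ :=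
  (ha.image (·⁻¹)).subset <| by
    rintro _ ⟨u, rfl⟩
    exact ⟨_, ⟨a.invApply u, rfl⟩, (sec_inv a u).symm⟩

def nontrivialSecs (f : TreeAut m) (n : ℕ) : Set (List (Fin m)) :=
  {u | u.length = n ∧ f.sec u ≠ 1}

lemma nontrivialSecs_finite (f : TreeAut m) (n : ℕ) : (nontrivialSecs f n).Finite :=
  (List.finite_length_eq (Fin m) n).subset fun _ hu => hu.1

lemma nontrivialSecs_one (n : ℕ) : nontrivialSecs (1 : TreeAut m) n = ∅ :=
  Set.eq_empty_of_forall_notMem fun _ hu => hu.2 rfl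

lemma nontrivialSecs_inv (a : TreeAut m) (n : ℕ) :
    nontrivialSecs a⁻¹ n = a.apply '' nontrivialSecs a n := by
  ext u
  constructor
  · rintro ⟨hlen, hne⟩
    refine ⟨a.invApply u, ⟨by rw [invApply_length, hlen], ?_⟩, apply_invApply a u⟩
    rwa [sec_inv, Ne, inv_eq_one] at hne
  · rintro ⟨v, ⟨hlen, hne⟩, rfl⟩
    refine ⟨by rw [apply_length, hlen], ?_⟩
    rwa [sec_inv, invApply_apply, Ne, inv_eq_one]

lemma nontrivialSecs_mul_subset (a b : TreeAut m) (n : ℕ) :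
    nontrivialSecs (a * b) n ⊆ b.invApply '' nontrivialSecs a n ∪ nontrivialSecs b n := by
  rintro u ⟨hlen, hne⟩
  by_cases hb : b.sec u = 1
  · refine Or.inl ⟨b.apply u, ⟨by rw [apply_length, hlen], fun ha => hne ?_⟩,
      invApply_apply b u⟩
    rw [mul_sec, ha, hb, mul_one]
  · exact Or.inr ⟨hlen, hb⟩

lemma boundedAut_one : BoundedAut (1 : TreeAut m) :=
  ⟨0, fun n => by rw [← nontrivialSecs, nontrivialSecs_one, Set.ncard_empty]⟩

lemma boundedAut_mul {a b : TreeAut m} (ha : BoundedAut a) (hb : BoundedAut b) :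
    BoundedAut (a * b) := by
  obtain ⟨C, hC⟩ := ha
  obtain ⟨D, hD⟩ := hb
  refine ⟨C + D, fun n => ?_⟩
  calc (nontrivialSecs (a * b) n).ncard
      ≤ (b.invApply '' nontrivialSecs a n ∪ nontrivialSecs b n).ncard :=
        Set.ncard_le_ncard (nontrivialSecs_mul_subset a b n)
          (((nontrivialSecs_finite a n).image _).union (nontrivialSecs_finite b n))
    _ ≤ (b.invApply '' nontrivialSecs a n).ncard + (nontrivialSecs b n).ncard :=
        Set.ncard_union_le _ _
    _ = (nontrivialSecs a n).ncard + (nontrivialSecs b n).ncard := by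
        rw [Set.ncard_image_of_injective _ (invApply_injective b)]
    _ ≤ C + D := Nat.add_le_add (hC n) (hD n)

lemma boundedAut_inv {a : TreeAut m} (ha : BoundedAut a) : BoundedAut a⁻¹ := by
  obtain ⟨C, hC⟩ := ha
  refine ⟨C, fun n => ?_⟩
  rw [← nontrivialSecs, nontrivialSecs_inv, Set.ncard_image_of_injective _ (apply_injective a)]
  exact hC n

variable (m) in
def finiteStateBounded : Subgroup (TreeAut m) where
  carrier := {g | FiniteState g ∧ BoundedAut g}
  one_mem' := ⟨finiteState_one, boundedAut_one⟩
  mul_mem' ha hb := ⟨finiteState_mul ha.1 hb.1, boundedAut_mul ha.2 hb.2⟩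
  inv_mem' ha := ⟨finiteState_inv ha.1, boundedAut_inv ha.2⟩

end FiniteStateBounded

section BasilicaSections

variable [NeZero m] {s : ℕ}

lemma betaAut_one (i : ℕ) : betaAut s i (1 : TreeAut m) = 1 := by
  refine ext_label fun u => ?_
  induction u generalizing i with
  | nil => by_cases hi : i = 0 <;> simp [betaAut, betaLabel, hi]
  | cons x u ih => by_cases hi : i = 0 <;> by_cases hx : x = 0 <;> simp_all [betaAut, betaLabel]

lemma betaAut_sec_singleton (i : ℕ) (g : TreeAut m) (x : Fin m) :
    (betaAut s i g).sec [x] =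
      if i = 0 then betaAut s (s - 1) (g.sec [x])
      else if x = 0 then betaAut s (i - 1) g else 1 := by
  refine ext_label fun u => ?_
  change betaLabel s (x :: u) i g = _
  rw [betaLabel]
  split_ifs <;> rfl

variable (s) in
def betaCore : ℕ → List (Fin m) → Option (List (Fin m))
  | _, [] => some []
  | i, x :: u =>
      if i = 0 then (betaCore (s - 1) u).map (x :: ·)
      else if x = 0 then betaCore (i - 1) u else none

variable (s) in
def betaCoreLength : ℕ → ℕ → ℕ
  | _, 0 => 0
  | i, n + 1 => if i = 0 then betaCoreLength (s - 1) n + 1 else betaCoreLength (i - 1) n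

lemma length_of_betaCore_eq_some {i : ℕ} {u w : List (Fin m)} (h : betaCore s i u = some w) :
    w.length = betaCoreLength s i u.length := by
  induction u generalizing i w with
  | nil => cases h; rfl
  | cons x u ih =>
      simp only [betaCore] at h
      split_ifs at h with hi hx
      · obtain ⟨w', hw', rfl⟩ := Option.map_eq_some_iff.mp h
        simp [betaCoreLength, hi, ih hw']
      · simpa [betaCoreLength, hi] using ih h

lemma eq_of_betaCore_eq_some {i : ℕ} {u v w : List (Fin m)} (hlen : u.length = v.length)
    (hu : betaCore s i u = some w) (hv : betaCore s i v = some w) : u = v := by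
  induction u generalizing i v w with
  | nil => exact (List.length_eq_zero_iff.mp hlen.symm).symm
  | cons x u ih =>
      obtain _ | ⟨y, v⟩ := v
      · simp at hlen
      simp only [List.length_cons, Nat.add_right_cancel_iff] at hlen
      simp only [betaCore] at hu hv
      split_ifs at hu hv with hi hx hy
      · obtain ⟨w₁, hw₁, rfl⟩ := Option.map_eq_some_iff.mp hu
        obtain ⟨w₂, hw₂, hw⟩ := Option.map_eq_some_iff.mp hv
        obtain ⟨rfl, rfl⟩ := List.cons_eq_cons.mp hw
        rw [ih hlen hw₁ hw₂]
      · rw [hx, hy, ih hlen hu hv]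

lemma betaAut_sec_eq_one_or {i : ℕ} (hi : i < s) (g : TreeAut m) (u : List (Fin m)) :
    (betaAut s i g).sec u = 1 ∨
      ∃ w, betaCore s i u = some w ∧
        ∃ j < s, (betaAut s i g).sec u = betaAut s j (g.sec w) := by
  induction u generalizing i g with
  | nil => exact Or.inr ⟨[], rfl, i, hi, rfl⟩
  | cons x u ih =>
      rw [← List.singleton_append, ← sec_sec, betaAut_sec_singleton]
      by_cases hi0 : i = 0
      · rcases ih (i := s - 1) (by omega) (g.sec [x]) with h | ⟨w, hw, j, hj, h⟩
        · exact Or.inl (by simpa [hi0] using h)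
        · refine Or.inr ⟨x :: w, by simp [betaCore, hi0, hw], j, hj, ?_⟩
          simpa [hi0, sec_sec] using h
      · by_cases hx : x = 0
        · rcases ih (i := i - 1) (by omega) g with h | ⟨w, hw, j, hj, h⟩
          · exact Or.inl (by simpa [hi0, hx] using h)
          · exact Or.inr ⟨w, by simp [betaCore, hi0, hx, hw], j, hj,
              by simpa [hi0, hx] using h⟩
        · exact Or.inl (by simp [hi0, hx])

lemma finiteState_betaAut {i : ℕ} (hi : i < s) {f : TreeAut m} (hf : FiniteState f) :
    FiniteState (betaAut s i f) :=
  ((Set.finite_singleton 1).union ((Set.finite_Iio s).image2 (betaAut s) hf)).subset <| by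
    rintro _ ⟨u, rfl⟩
    rcases betaAut_sec_eq_one_or hi f u with h | ⟨w, -, j, hj, h⟩
    · exact Or.inl h
    · exact Or.inr ⟨j, hj, f.sec w, ⟨w, rfl⟩, h.symm⟩

lemma boundedAut_betaAut {i : ℕ} (hi : i < s) {f : TreeAut m} (hf : BoundedAut f) :
    BoundedAut (betaAut s i f) := by
  obtain ⟨C, hC⟩ := hf
  refine ⟨C, fun n => le_trans ?_ (hC (betaCoreLength s i n))⟩
  have hcore : ∀ u ∈ nontrivialSecs (betaAut s i f) n,
      ∃ w, betaCore s i u = some w ∧ w ∈ nontrivialSecs f (betaCoreLength s i n) := by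
    rintro u ⟨hlen, hne⟩
    rcases betaAut_sec_eq_one_or hi f u with h | ⟨w, hw, j, -, h⟩
    · exact absurd h hne
    refine ⟨w, hw, by rw [length_of_betaCore_eq_some hw, hlen], fun hw1 => hne ?_⟩
    rw [h, hw1, betaAut_one]
  refine Set.ncard_le_ncard_of_injOn (fun u => (betaCore s i u).getD []) (fun u hu => ?_)
    (fun u hu v hv huv => ?_) (nontrivialSecs_finite f _)
  · obtain ⟨w, hw, hmem⟩ := hcore u hu
    simp only [hw, Option.getD_some]
    exact hmem
  · obtain ⟨w, hw, -⟩ := hcore u hu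
    obtain ⟨w', hw', -⟩ := hcore v hv
    simp only [hw, hw', Option.getD_some] at huv
    exact eq_of_betaCore_eq_some (hu.1.trans hv.1.symm) hw (huv ▸ hw')

end BasilicaSections

theorem basilica_finiteState_bounded_general {m : ℕ} [NeZero m]
    (G : Subgroup (TreeAut m)) (s : ℕ)
    (hG : ∃ S : Set (TreeAut m), (∀ f ∈ S, FiniteState f ∧ BoundedAut f) ∧
      G = Subgroup.closure S) :
    (∃ S : Set (TreeAut m), (∀ f ∈ S, FiniteState f ∧ BoundedAut f) ∧
      basilica s G = Subgroup.closure S) ∧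
    ∀ f : TreeAut m, FiniteState f → BoundedAut f → ∀ i < s,
      FiniteState (betaAut s i f) ∧ BoundedAut (betaAut s i f) := by
  obtain ⟨S, hS, rfl⟩ := hG
  have hβ : ∀ f : TreeAut m, FiniteState f → BoundedAut f → ∀ i < s,
      FiniteState (betaAut s i f) ∧ BoundedAut (betaAut s i f) :=
    fun f hf hb i hi => ⟨finiteState_betaAut hi hf, boundedAut_betaAut hi hb⟩
  refine ⟨⟨_, ?_, rfl⟩, hβ⟩
  rintro _ ⟨g, hg, i, hi, rfl⟩
  have hg' : g ∈ finiteStateBounded m := (Subgroup.closure_le _).mpr (fun f hf => hS f hf) hg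
  exact hβ g hg'.1 hg'.2 i hi

/-- If `G ≤ Aut(T)` is generated by finite-state bounded automorphisms,
then so is `Bas_s(G)` for every `s ≥ 1`; indeed, for every finite-state bounded
`f ∈ Aut(T)` and every `i ∈ {0, …, s-1}`, the element `β_i(f)` is finite-state and
bounded. -/
theorem basilica_finiteState_bounded {m : ℕ} [NeZero m] (hm : 2 ≤ m)
    (G : Subgroup (TreeAut m)) (s : ℕ) (hs : 1 ≤ s)
    (hG : ∃ S : Set (TreeAut m), (∀ f ∈ S, FiniteState f ∧ BoundedAut f) ∧
      G = Subgroup.closure S) :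
    (∃ S : Set (TreeAut m), (∀ f ∈ S, FiniteState f ∧ BoundedAut f) ∧
      basilica s G = Subgroup.closure S) ∧
    ∀ f : TreeAut m, FiniteState f → BoundedAut f → ∀ i < s,
      FiniteState (betaAut s i f) ∧ BoundedAut (betaAut s i f) :=
  basilica_finiteState_bounded_general G s hG

end Basilica
end
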